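/- arXiv:1801.00621 — 7 statements merged into one kernel-verified Lean document; each statement's English description precedes it below -/
import Mathlib

section
/- Let T = {0,1}^m with the product partial order. If L ⊆ T is a sublattice (closed under pointwise max and min), is symmetric (closed under the coordinatewise complement τ ↦ 1−τ), and separates points (for all i ≠ j in {1,…,m} there exists τ ∈ L with τ_i ≠ τ_j), then L = T. -/
private lemma bool_finset_sup_eq_true {α : Type*} (s : Finset α) (f : α → Bool) :
    s.sup f = true ↔ ∃ i ∈ s, f i = true := by
  classical
  induction s using Finset.induction with
  | empty => simp
  | insert _ _ h ih =>
    rw [Finset.sup_insert]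
    constructor
    · intro hh
      rcases Bool.or_eq_true_iff.mp (by simpa [Bool.max_eq_or] using hh) with h1 | h1
      · exact ⟨_, Finset.mem_insert_self _ _, h1⟩
      · obtain ⟨i, hi, hfi⟩ := ih.mp h1
        exact ⟨i, Finset.mem_insert_of_mem hi, hfi⟩
    · rintro ⟨i, hi, hfi⟩
      rcases Finset.mem_insert.mp hi with rfl | hi
      · simp [Bool.max_eq_or, hfi]
      · simp [Bool.max_eq_or, ih.mpr ⟨i, hi, hfi⟩]

private lemma bool_finset_inf_eq_true {α : Type*} (s : Finset α) (f : α → Bool) :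
    s.inf f = true ↔ ∀ i ∈ s, f i = true := by
  classical
  induction s using Finset.induction with
  | empty => simp
  | insert _ _ h ih =>
    rw [Finset.inf_insert]
    constructor
    · intro hh
      have hh' := Bool.and_eq_true_iff.mp (by simpa [Bool.min_eq_and] using hh)
      intro i hi
      rcases Finset.mem_insert.mp hi with rfl | hi
      · exact hh'.1
      · exact ih.mp hh'.2 i hi
    · intro hh
      have h1 := hh _ (Finset.mem_insert_self _ _)
      have h2 := ih.mpr (fun i hi => hh i (Finset.mem_insert_of_mem hi))
      simp [Bool.min_eq_and, h1, h2]

/-- A symmetric sublattice of `{0,1}^m` that separates points is everything. -/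
theorem symmetric_separating_sublattice_eq_univ (m : ℕ) (L : Set (Fin m → Bool))
    (hne : L.Nonempty)
    (hsup : ∀ τ ∈ L, ∀ σ ∈ L, (fun i => τ i || σ i) ∈ L)
    (hinf : ∀ τ ∈ L, ∀ σ ∈ L, (fun i => τ i && σ i) ∈ L)
    (hsym : ∀ τ ∈ L, (fun i => !τ i) ∈ L)
    (hsep : ∀ i j : Fin m, i ≠ j → ∃ τ ∈ L, τ i ≠ τ j) :
    L = Set.univ := by
  classical
  obtain ⟨τ0, hτ0⟩ := hne
  have hTop : (fun _ : Fin m => true) ∈ L := by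
    have h := hsup τ0 hτ0 _ (hsym τ0 hτ0)
    have : (fun i => τ0 i || !τ0 i) = (fun _ : Fin m => true) := by
      funext i; simp
    rwa [this] at h
  have hBot : (fun _ : Fin m => false) ∈ L := by
    have h := hinf τ0 hτ0 _ (hsym τ0 hτ0)
    have : (fun i => τ0 i && !τ0 i) = (fun _ : Fin m => false) := by
      funext i; simp
    rwa [this] at h
  -- closure under finite sups
  have hsupS : ∀ (s : Finset (Fin m)) (f : Fin m → (Fin m → Bool)),
      (∀ i ∈ s, f i ∈ L) → (fun k => s.sup (fun i => f i k)) ∈ L := by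
    intro s
    induction s using Finset.induction with
    | empty => intro f _; simpa using hBot
    | @insert a s ha ih =>
      intro f hf
      have h1 := hf _ (Finset.mem_insert_self _ _)
      have h2 := ih f (fun i hi => hf i (Finset.mem_insert_of_mem hi))
      have h3 := hsup _ h1 _ h2
      have : (fun k => (insert a s).sup (fun i => f i k)) =
          (fun k => f a k || s.sup (fun i => f i k)) := by
        funext k; simp [Finset.sup_insert, Bool.max_eq_or]
      rw [this]; exact h3
  -- closure under finite infs
  have hinfS : ∀ (s : Finset (Fin m)) (f : Fin m → (Fin m → Bool)),
      (∀ i ∈ s, f i ∈ L) → (fun k => s.inf (fun i => f i k)) ∈ L := by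
    intro s
    induction s using Finset.induction with
    | empty => intro f _; simpa using hTop
    | @insert a s ha ih =>
      intro f hf
      have h1 := hf _ (Finset.mem_insert_self _ _)
      have h2 := ih f (fun i hi => hf i (Finset.mem_insert_of_mem hi))
      have h3 := hinf _ h1 _ h2
      have : (fun k => (insert a s).inf (fun i => f i k)) =
          (fun k => f a k && s.inf (fun i => f i k)) := by
        funext k; simp [Finset.inf_insert, Bool.min_eq_and]
      rw [this]; exact h3
  -- pairs
  have pair : ∀ i j : Fin m, i ≠ j → ∃ τ ∈ L, τ i = true ∧ τ j = false := by
    intro i j hij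
    obtain ⟨τ, hτ, hne'⟩ := hsep i j hij
    cases hti : τ i with
    | true =>
      refine ⟨τ, hτ, hti, ?_⟩
      cases htj : τ j with
      | true => exact absurd (hti.trans htj.symm) hne'
      | false => rfl
    | false =>
      refine ⟨fun k => !τ k, hsym τ hτ, by simp [hti], ?_⟩
      cases htj : τ j with
      | true => simp [htj]
      | false => exact absurd (hti.trans htj.symm) hne'
  -- atoms
  have atom : ∀ i : Fin m, ∃ e ∈ L, e i = true ∧ ∀ j, j ≠ i → e j = false := by
    intro i
    have ht : ∀ j : Fin m, ∃ τ, τ ∈ L ∧ τ i = true ∧ (j ≠ i → τ j = false) := by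
      intro j
      by_cases h : j = i
      · exact ⟨fun _ => true, hTop, rfl, fun hj => absurd h hj⟩
      · obtain ⟨τ, hτ, h1, h2⟩ := pair i j (Ne.symm h)
        exact ⟨τ, hτ, h1, fun _ => h2⟩
    choose t ht1 ht2 ht3 using ht
    refine ⟨fun k => Finset.univ.inf (fun j => t j k),
      hinfS _ _ (fun j _ => ht1 j), ?_, ?_⟩
    · exact (bool_finset_inf_eq_true _ _).mpr (fun j _ => ht2 j)
    · intro j hj
      by_contra hcon
      have := (bool_finset_inf_eq_true Finset.univ (fun l => t l j)).mp
        (Bool.of_not_eq_false hcon) j (Finset.mem_univ j)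
      exact absurd this (by simp [ht3 j hj])
  choose e he1 he2 he3 using atom
  ext σ
  simp only [Set.mem_univ, iff_true]
  have key : (fun k => (Finset.univ.filter (fun j => σ j = true)).sup (fun j => e j k)) = σ := by
    funext k
    cases hk : σ k with
    | true =>
      exact (bool_finset_sup_eq_true _ _).mpr
        ⟨k, Finset.mem_filter.mpr ⟨Finset.mem_univ k, hk⟩, he2 k⟩
    | false =>
      by_contra hcon
      obtain ⟨j, hj, hjk⟩ := (bool_finset_sup_eq_true _ _).mp (Bool.of_not_eq_false hcon)
      have hjσ := (Finset.mem_filter.mp hj).2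
      by_cases hjk' : j = k
      · rw [hjk'] at hjσ; rw [hjσ] at hk; simp at hk
      · exact absurd hjk (by simp [he3 j k (fun h => hjk' h.symm)])
  rw [← key]
  exact hsupS _ _ (fun j _ => he1 j)
end

section
/- Let P be a probability on Ω = ∏_{i∈Λ}{0,1} with Λ finite. P satisfies the FKG lattice condition (P(ω∨ω')P(ω∧ω') ≥ P(ω)P(ω') for all ω,ω') if and only if for every K ⊆ Λ, every α ∈ {0,1}^K, and every ω on K^c, P(α·ω)·P(α·ω̄) ≤ P(α·1̂)·P(α·0̂), where ω̄ is the coordinatewise flip of ω on K^c, 1̂ is the all-ones configuration on K^c and 0̂ the all-zeros configuration on K^c, and α·ω denotes concatenation. -/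
/-!
For a fixed `α` on `K`, the configurations `α·ω` and `α·ω̄` have join `α·1̂` and meet `α·0̂`, so
the folded inequality is the lattice condition for that pair. Conversely every pair `ω, ω'` is of
this form: take `K` to be the set where they agree and `α = ω`; then `ω' = α·ω̄` off `K`.
-/

variable {Λ : Type*}

/-- Concatenation `α·ω`: agrees with `α` on `K` and with `ω` on `Kᶜ`. -/
def glue (K : Finset Λ) [DecidableEq Λ] (α ω : Λ → Bool) : Λ → Bool :=
  fun i => if i ∈ K then α i else ω i

/-- Coordinatewise flip. -/
def flipC (ω : Λ → Bool) : Λ → Bool := fun i => !ω i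

section Glue

variable [DecidableEq Λ] (K : Finset Λ) (α ω : Λ → Bool)

theorem glue_self : glue K α α = α := by
  funext i
  simp [glue]

theorem glue_or_glue_flipC :
    (fun i => glue K α ω i || glue K α (flipC ω) i) = glue K α fun _ => true := by
  funext i
  by_cases hi : i ∈ K <;> simp [glue, flipC, hi]

theorem glue_and_glue_flipC :
    (fun i => glue K α ω i && glue K α (flipC ω) i) = glue K α fun _ => false := by
  funext i
  by_cases hi : i ∈ K <;> simp [glue, flipC, hi]

end Glue

section AgreeSet

variable [DecidableEq Λ] [Fintype Λ] (ω ω' : Λ → Bool)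

def agreeSet : Finset Λ := Finset.univ.filter fun i => ω i = ω' i

theorem glue_agreeSet_flipC : glue (agreeSet ω ω') ω (flipC ω) = ω' := by
  funext i
  simp only [glue, flipC, agreeSet, Finset.mem_filter, Finset.mem_univ, true_and]
  cases ω i <;> cases ω' i <;> rfl

theorem glue_agreeSet_true : glue (agreeSet ω ω') ω (fun _ => true) = fun i => ω i || ω' i := by
  funext i
  simp only [glue, agreeSet, Finset.mem_filter, Finset.mem_univ, true_and]
  cases ω i <;> cases ω' i <;> rfl

theorem glue_agreeSet_false :
    glue (agreeSet ω ω') ω (fun _ => false) = fun i => ω i && ω' i := by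
  funext i
  simp only [glue, agreeSet, Finset.mem_filter, Finset.mem_univ, true_and]
  cases ω i <;> cases ω' i <;> rfl

end AgreeSet

theorem fkg_iff_folded_max_general [DecidableEq Λ] [Fintype Λ]
    (P : (Λ → Bool) → ℝ) :
    (∀ ω ω' : Λ → Bool,
        P ω * P ω' ≤ P (fun i => ω i || ω' i) * P (fun i => ω i && ω' i)) ↔
    (∀ (K : Finset Λ) (α ω : Λ → Bool),
        P (glue K α ω) * P (glue K α (flipC ω)) ≤
          P (glue K α fun _ => true) * P (glue K α fun _ => false)) := by
  constructor
  · intro hFKG K α ω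
    simpa only [glue_or_glue_flipC, glue_and_glue_flipC] using
      hFKG (glue K α ω) (glue K α (flipC ω))
  · intro hFolded ω ω'
    simpa only [glue_self, glue_agreeSet_flipC, glue_agreeSet_true, glue_agreeSet_false] using
      hFolded (agreeSet ω ω') ω ω

/-- `P` satisfies the FKG lattice condition iff for every `K ⊆ Λ`,
`α ∈ {0,1}^K` and `ω` on `Kᶜ`, `P(α·ω)·P(α·ω̄) ≤ P(α·1̂)·P(α·0̂)`. -/
theorem fkg_iff_folded_max [DecidableEq Λ] [Fintype Λ]
    (P : (Λ → Bool) → ℝ) (h0 : ∀ ω, 0 ≤ P ω) :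
    (∀ ω ω' : Λ → Bool,
        P ω * P ω' ≤ P (fun i => ω i || ω' i) * P (fun i => ω i && ω' i)) ↔
    (∀ (K : Finset Λ) (α ω : Λ → Bool),
        P (glue K α ω) * P (glue K α (flipC ω)) ≤
          P (glue K α fun _ => true) * P (glue K α fun _ => false)) :=
  fkg_iff_folded_max_general P
end

section
/- If P on {0,1}^Λ satisfies the FKG lattice condition, then for every K ⊆ Λ and α ∈ {0,1}^K, the folded function P^{K,α}(ω) := P(α·ω)·P(α·ω̄) on {0,1}^{K^c} also satisfies the FKG lattice condition. -/
/-!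
Concatenation with a fixed `α` is a lattice homomorphism of `{0,1}^Λ`, and the flip `ω ↦ ω̄`
exchanges `∨` and `∧`, which the symmetric FKG inequality does not see. So both factors
`ω ↦ P(α·ω)` and `ω ↦ P(α·ω̄)` of the folding satisfy the FKG lattice condition, and the
condition is stable under products of nonnegative functions.
-/

variable {Λ : Type*}

def FKGLatticeCondition {β R : Type*} [Lattice β] [Mul R] [LE R] (f : β → R) : Prop :=
  ∀ a b, f a * f b ≤ f (a ⊔ b) * f (a ⊓ b)

namespace FKGLatticeCondition

variable {α β R : Type*}

theorem comp [Lattice α] [Lattice β] [Mul R] [LE R] {f : β → R} (hf : FKGLatticeCondition f)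
    (g : LatticeHom α β) : FKGLatticeCondition (f ∘ g) := by
  intro a b
  simpa only [Function.comp_apply, map_sup, map_inf] using hf (g a) (g b)

theorem comp_compl [BooleanAlgebra α] [CommMagma R] [LE R] {f : α → R}
    (hf : FKGLatticeCondition f) : FKGLatticeCondition (fun a => f aᶜ) := by
  intro a b
  simpa only [compl_sup, compl_inf, mul_comm (f (aᶜ ⊓ bᶜ))] using hf aᶜ bᶜ

theorem mul [Lattice α] [CommSemiring R] [PartialOrder R] [IsOrderedRing R] {f g : α → R}
    (hf₀ : 0 ≤ f) (hg₀ : 0 ≤ g) (hf : FKGLatticeCondition f) (hg : FKGLatticeCondition g) :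
    FKGLatticeCondition (f * g) := by
  intro a b
  calc f a * g a * (f b * g b) = f a * f b * (g a * g b) := by ring
    _ ≤ f (a ⊔ b) * f (a ⊓ b) * (g (a ⊔ b) * g (a ⊓ b)) :=
      mul_le_mul (hf a b) (hg a b) (mul_nonneg (hg₀ a) (hg₀ b))
        (mul_nonneg (hf₀ _) (hf₀ _))
    _ = f (a ⊔ b) * g (a ⊔ b) * (f (a ⊓ b) * g (a ⊓ b)) := by ring

end FKGLatticeCondition

def glueHom [DecidableEq Λ] (K : Finset Λ) (α : Λ → Bool) :
    LatticeHom (Λ → Bool) (Λ → Bool) where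
  toFun := glue K α
  map_sup' ω ω' := by
    funext i
    by_cases hi : i ∈ K <;> simp [glue, hi]
  map_inf' ω ω' := by
    funext i
    by_cases hi : i ∈ K <;> simp [glue, hi]

theorem folding_preserves_fkg_general [DecidableEq Λ]
    (P : (Λ → Bool) → ℝ) (h0 : ∀ ω, 0 ≤ P ω)
    (hfkg : ∀ ω ω' : Λ → Bool,
      P ω * P ω' ≤ P (fun i => ω i || ω' i) * P (fun i => ω i && ω' i))
    (K : Finset Λ) (α : Λ → Bool) :
    ∀ ω ω' : Λ → Bool,
      (P (glue K α ω) * P (glue K α (flipC ω))) *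
        (P (glue K α ω') * P (glue K α (flipC ω'))) ≤
      (P (glue K α fun i => ω i || ω' i) *
          P (glue K α (flipC fun i => ω i || ω' i))) *
        (P (glue K α fun i => ω i && ω' i) *
          P (glue K α (flipC fun i => ω i && ω' i))) := by
  have hglued : FKGLatticeCondition (P ∘ glueHom K α) :=
    FKGLatticeCondition.comp hfkg (glueHom K α)
  -- `flipC ω` is `ωᶜ`, and `ω ⊔ ω'`, `ω ⊓ ω'` are the pointwise `||`, `&&`, all definitionally.
  exact hglued.mul (fun _ => h0 _) (fun _ => h0 _) hglued.comp_compl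

/-- if `P` satisfies the FKG lattice condition, then so does every
folding `P^{K,α}(ω) = P(α·ω)·P(α·ω̄)`. -/
theorem folding_preserves_fkg [DecidableEq Λ] [Fintype Λ]
    (P : (Λ → Bool) → ℝ) (h0 : ∀ ω, 0 ≤ P ω)
    (hfkg : ∀ ω ω' : Λ → Bool,
      P ω * P ω' ≤ P (fun i => ω i || ω' i) * P (fun i => ω i && ω' i))
    (K : Finset Λ) (α : Λ → Bool) :
    ∀ ω ω' : Λ → Bool,
      (P (glue K α ω) * P (glue K α (flipC ω))) *
        (P (glue K α ω') * P (glue K α (flipC ω'))) ≤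
      (P (glue K α fun i => ω i || ω' i) *
          P (glue K α (flipC fun i => ω i || ω' i))) *
        (P (glue K α fun i => ω i && ω' i) *
          P (glue K α (flipC fun i => ω i && ω' i))) :=
  folding_preserves_fkg_general P h0 hfkg K α
end

section
/- Let μ be a probability on a finite set S. Define the iterated squaring operation μ_{n+1}(x) = μ_n(x)²/∑_{y} μ_n(y)², μ_0 = μ. Then μ_n converges pointwise to the uniform distribution on the set D of maximizers of μ, i.e. lim_n μ_n(x) = 1/|D| if μ(x) = max_y μ(y) and 0 otherwise. -/
open Filter

/- STATEMENT 8: iterated squaring-renormalization `μ_n(x) = μ(x)^{2^n} / ∑_y μ(y)^{2^n}`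
of a probability `μ` on a finite set converges pointwise to the uniform distribution on
the set `D` of maximizers of `μ`. -/
open Classical in
theorem iterated_squaring_tendsto_uniform_on_maximizers
    {S : Type*} [Fintype S] [Nonempty S] (μ : S → ℝ)
    (h0 : ∀ x, 0 ≤ μ x) (h1 : ∑ x, μ x = 1) (x : S) :
    Tendsto (fun n : ℕ => μ x ^ (2 ^ n) / ∑ y, μ y ^ (2 ^ n)) atTop
      (nhds (if x ∈ {z : S | ∀ y, μ y ≤ μ z} then
        (1 : ℝ) / Nat.card {z : S | ∀ y, μ y ≤ μ z} else 0)) := by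
  classical
  obtain ⟨m, hm⟩ := Finite.exists_max μ
  set M := μ m with hMdef
  have hMpos : 0 < M := by
    by_contra h
    push_neg at h
    have hz : ∀ y, μ y = 0 := fun y => le_antisymm ((hm y).trans h) (h0 y)
    simp [hz] at h1
  set D := {z : S | ∀ y, μ y ≤ μ z} with hD
  have hmD : m ∈ D := hm
  haveI : Nonempty ↥D := ⟨⟨m, hmD⟩⟩
  have hterm : ∀ y : S, Tendsto (fun n : ℕ => (μ y / M) ^ (2 ^ n)) atTop
      (nhds (if y ∈ D then (1:ℝ) else 0)) := by
    intro y
    by_cases hy : y ∈ D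
    · have hyM : μ y = M := le_antisymm (hm y) (hy m)
      simp [hy, hyM, div_self hMpos.ne']
    · have hne : μ y ≠ M := fun h => hy (fun z => h ▸ hm z)
      have hlt : μ y < M := lt_of_le_of_ne (hm y) hne
      have h01 : μ y / M < 1 := (div_lt_one hMpos).2 hlt
      have h00 : 0 ≤ μ y / M := div_nonneg (h0 y) hMpos.le
      simp only [hy, if_false]
      exact (tendsto_pow_atTop_nhds_zero_of_lt_one h00 h01).comp
        (tendsto_pow_atTop_atTop_of_one_lt (by norm_num : 1 < 2))
  have hsum : Tendsto (fun n : ℕ => ∑ y, (μ y / M) ^ (2 ^ n)) atTop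
      (nhds (∑ y, if y ∈ D then (1:ℝ) else 0)) :=
    tendsto_finset_sum _ (fun y _ => hterm y)
  have hcard : (∑ y, if y ∈ D then (1:ℝ) else 0) = (Nat.card D : ℝ) := by
    rw [Finset.sum_boole, Nat.card_eq_fintype_card, Fintype.card_subtype]
  have hDpos : (0:ℝ) < (Nat.card D : ℝ) := by
    have : 0 < Nat.card D := Nat.card_pos
    exact_mod_cast this
  rw [hcard] at hsum
  have hdiv : Tendsto (fun n : ℕ => (μ x / M) ^ (2 ^ n) / ∑ y, (μ y / M) ^ (2 ^ n))
      atTop (nhds ((if x ∈ D then (1:ℝ) else 0) / (Nat.card D : ℝ))) :=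
    (hterm x).div hsum hDpos.ne'
  have heq : ∀ n : ℕ, (μ x / M) ^ (2 ^ n) / ∑ y, (μ y / M) ^ (2 ^ n)
      = μ x ^ (2 ^ n) / ∑ y, μ y ^ (2 ^ n) := by
    intro n
    have hMk : (M : ℝ) ^ (2 ^ n) ≠ 0 := pow_ne_zero _ hMpos.ne'
    simp only [div_pow]
    rw [← Finset.sum_div, div_div_div_cancel_right₀]
    exact hMk
  have hval : (if x ∈ D then (1:ℝ) else 0) / (Nat.card D : ℝ)
      = if x ∈ D then (1 : ℝ) / (Nat.card D : ℝ) else 0 := by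
    by_cases hx : x ∈ D <;> simp [hx]
  rw [hval] at hdiv
  exact hdiv.congr heq
end

section
/- With μ_n the iterated squaring renormalization of μ as above, for every x ∈ D (the set of maximizers of μ) and every n, |μ_n(x) − 1/|D|| ≤ |S| · (M'/M)^{2^n}, where M = max μ and M' = max_{y ∉ D} μ(y) (with M' = 0 if D = S). In particular the convergence is super-exponential: (M'/M) < 1. -/
/-! The sum `∑ μ(y)^N` is `|D| M^N` plus a remainder of at most `|S| M'^N`, and
`|M^N / (k M^N + R) - 1/k| = R / (k (k M^N + R)) ≤ R / M^N`; hence the error is at most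
`|S| (M'/M)^N`. Finiteness of `S` makes `M'` attained, so `M' < M`. -/

open Finset

theorem abs_div_mul_add_sub_one_div_le {a k r : ℝ} (ha : 0 < a) (hk : 1 ≤ k) (hr : 0 ≤ r) :
    |a / (k * a + r) - 1 / k| ≤ r / a := by
  have hk0 : 0 < k := one_pos.trans_le hk
  have hden : a ≤ k * (k * a + r) := by
    nlinarith [mul_nonneg hk0.le hr, mul_nonneg (mul_nonneg (sub_nonneg.2 hk) ha.le) hk0.le]
  have hdiff : a / (k * a + r) - 1 / k = -(r / (k * (k * a + r))) := by
    field_simp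
    ring
  rw [hdiff, abs_neg, abs_of_nonneg (by positivity)]
  exact div_le_div_of_nonneg_left hr ha hden

theorem Set.Finite.sSup_lt {s : Set ℝ} (hs : s.Finite) {M : ℝ} (hM : 0 < M)
    (h : ∀ a ∈ s, a < M) : sSup s < M := by
  rcases s.eq_empty_or_nonempty with rfl | hne
  · rwa [Real.sSup_empty]
  · exact h _ (hne.csSup_mem hs)

section Maximizers

variable {S : Type*} [Fintype S] {f : S → ℝ} {x : S}

theorem sum_pow_eq_card_mul_add_sum_filter_lt (hx : ∀ y, f y ≤ f x) (N : ℕ) :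
    ∑ y, f y ^ N =
      Nat.card {z : S | ∀ y, f y ≤ f z} * f x ^ N + ∑ y with f y < f x, f y ^ N := by
  classical
  rw [← sum_filter_add_sum_filter_not univ (fun z => ∀ y, f y ≤ f z)]
  congr 1
  · rw [sum_congr rfl fun z hz => by rw [le_antisymm (hx z) ((mem_filter.1 hz).2 x)],
      sum_const, nsmul_eq_mul, Nat.card_eq_fintype_card, Fintype.card_subtype]
    rfl
  · refine sum_congr (filter_congr fun z _ => ?_) fun _ _ => rfl
    simp only [not_forall, not_le]
    exact ⟨fun ⟨y, hy⟩ => hy.trans_le (hx y), fun h => ⟨x, h⟩⟩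

theorem sum_filter_lt_pow_le (h0 : ∀ y, 0 ≤ f y) {M' : ℝ} (hM'0 : 0 ≤ M')
    (hM' : ∀ y, f y < f x → f y ≤ M') (N : ℕ) :
    ∑ y with f y < f x, f y ^ N ≤ Fintype.card S * M' ^ N := calc
  _ ≤ #{y | f y < f x} • M' ^ N :=
    sum_le_card_nsmul _ _ _ fun y hy => pow_le_pow_left₀ (h0 y) (hM' y (mem_filter.1 hy).2) N
  _ ≤ Fintype.card S * M' ^ N := by
    rw [nsmul_eq_mul]
    gcongr
    exact_mod_cast card_filter_le _ _

theorem abs_pow_div_sum_pow_sub_one_div_card_le (h0 : ∀ y, 0 ≤ f y) (hx : ∀ y, f y ≤ f x)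
    (hfx : 0 < f x) {M' : ℝ} (hM'0 : 0 ≤ M') (hM' : ∀ y, f y < f x → f y ≤ M') (N : ℕ) :
    |f x ^ N / ∑ y, f y ^ N - 1 / Nat.card {z : S | ∀ y, f y ≤ f z}| ≤
      Fintype.card S * (M' / f x) ^ N := by
  have hcard : (1 : ℝ) ≤ Nat.card {z : S | ∀ y, f y ≤ f z} := by
    have : Nonempty {z : S | ∀ y, f y ≤ f z} := ⟨⟨x, hx⟩⟩
    exact_mod_cast Nat.card_pos
  rw [sum_pow_eq_card_mul_add_sum_filter_lt hx]
  calc _ ≤ (∑ y with f y < f x, f y ^ N) / f x ^ N :=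
        abs_div_mul_add_sub_one_div_le (pow_pos hfx N) hcard
          (sum_nonneg fun y _ => pow_nonneg (h0 y) N)
    _ ≤ Fintype.card S * M' ^ N / f x ^ N := by
        gcongr
        exact sum_filter_lt_pow_le h0 hM'0 hM' N
    _ = Fintype.card S * (M' / f x) ^ N := by rw [div_pow, mul_div_assoc]

end Maximizers

theorem iterated_squaring_superexponential_bound_general
    {S : Type*} [Fintype S] (μ : S → ℝ)
    (h0 : ∀ x, 0 ≤ μ x) (h1 : ∑ x, μ x = 1) :
    (∀ x, (∀ y, μ y ≤ μ x) → ∀ n : ℕ,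
      |μ x ^ (2 ^ n) / (∑ y, μ y ^ (2 ^ n)) -
          1 / (Nat.card {z : S | ∀ y, μ y ≤ μ z} : ℝ)| ≤
        (Fintype.card S : ℝ) *
          (sSup (μ '' {y | μ y < sSup (Set.range μ)}) / sSup (Set.range μ)) ^ (2 ^ n)) ∧
    sSup (μ '' {y | μ y < sSup (Set.range μ)}) / sSup (Set.range μ) < 1 := by
  have hbdd : BddAbove (Set.range μ) := (Set.finite_range μ).bddAbove
  obtain ⟨y₀, hy₀⟩ : ∃ y, 0 < μ y := by
    by_contra! h
    linarith [sum_nonpos fun y (_ : y ∈ univ) => h y]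
  have hM : 0 < sSup (Set.range μ) := hy₀.trans_le (le_csSup hbdd ⟨y₀, rfl⟩)
  have hfin (M : ℝ) : (μ '' {y | μ y < M}).Finite :=
    (Set.finite_range μ).subset (Set.image_subset_range _ _)
  refine ⟨fun x hx n => ?_, (div_lt_one hM).2 ((hfin _).sSup_lt hM ?_)⟩
  · have hMx : sSup (Set.range μ) = μ x :=
      IsGreatest.csSup_eq ⟨⟨x, rfl⟩, by rintro _ ⟨y, rfl⟩; exact hx y⟩
    rw [hMx] at hM ⊢
    exact abs_pow_div_sum_pow_sub_one_div_card_le h0 hx hM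
      (Real.sSup_nonneg (by rintro _ ⟨y, -, rfl⟩; exact h0 y))
      (fun y hy => le_csSup (hfin _).bddAbove ⟨y, hy, rfl⟩) _
  · rintro _ ⟨y, hy, rfl⟩
    exact hy

theorem iterated_squaring_superexponential_bound
    {S : Type*} [Fintype S] [Nonempty S] (μ : S → ℝ)
    (h0 : ∀ x, 0 ≤ μ x) (h1 : ∑ x, μ x = 1) :
    (∀ x, (∀ y, μ y ≤ μ x) → ∀ n : ℕ,
      |μ x ^ (2 ^ n) / (∑ y, μ y ^ (2 ^ n)) -
          1 / (Nat.card {z : S | ∀ y, μ y ≤ μ z} : ℝ)| ≤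
        (Fintype.card S : ℝ) *
          (sSup (μ '' {y | μ y < sSup (Set.range μ)}) / sSup (Set.range μ)) ^ (2 ^ n)) ∧
    sSup (μ '' {y | μ y < sSup (Set.range μ)}) / sSup (Set.range μ) < 1 :=
  iterated_squaring_superexponential_bound_general μ h0 h1
end

section
/- Let P be the uniform probability on a nonempty set D ⊆ {0,1}^Λ that is symmetric (closed under the global flip ω ↦ ω̄) and is a sublattice (closed under ∨, ∧; equivalently, P satisfies the FKG lattice condition). Define the equivalence relation u ∼ v iff ω_u = ω_v for all ω ∈ D, with clusters C_1,…,C_m the equivalence classes. Then D = {ω : ω is constant on each cluster C_j}. In particular |D| = 2^m. -/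
variable {Λ : Type*}

/-- `u ∼ v` iff every configuration in `D` agrees at `u` and `v`. -/
def agreeRel (D : Set (Λ → Bool)) (u v : Λ) : Prop := ∀ ω ∈ D, ω u = ω v

/-- The cluster equivalence relation of `D`. -/
def clusterSetoid (D : Set (Λ → Bool)) : Setoid Λ :=
  ⟨agreeRel D,
    ⟨fun _ _ _ => rfl, fun h ω hω => (h ω hω).symm,
      fun h h' ω hω => (h ω hω).trans (h' ω hω)⟩⟩

/-!
A sublattice `D` of `{0,1}^Λ` (`Λ` finite) containing `0` and `1` consists exactly of the
configurations that are monotone for the preorder `u ≤ v :↔ ∀ ω ∈ D, ω u ≤ ω v` (Birkhoff):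
the meet of the members of `D` that are `1` at `u` is the indicator of the up-set of `u`, and a
monotone `ψ` is the join of these indicators over the coordinates where `ψ = 1`.
For symmetric nonempty `D`, `ω ∧ ω̄ = 0` and `ω ∨ ω̄ = 1` lie in `D`, and flipping turns the
preorder into the cluster relation `∼`. So `D` is the set of configurations constant on clusters,
i.e. of functions on the quotient, of which there are `2 ^ m`.
-/

lemma Setoid.natCard_setOf_forall_rel_imp_eq {α β : Type*} [Finite α] (r : Setoid α) :
    Nat.card {f : α → β | ∀ u v, r u v → f u = f v} = Nat.card β ^ Nat.card (Quotient r) := by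
  rw [← Nat.card_fun]
  exact Nat.card_congr <| (Equiv.subtypeEquivRight fun _ => Iff.rfl).trans
    (Setoid.liftEquiv r)

section BooleanCube

variable {D : Set (Λ → Bool)}

lemma bot_mem_of_flipC_mem (hinf : InfClosed D) (hsym : ∀ ω ∈ D, flipC ω ∈ D) (hne : D.Nonempty) :
    ⊥ ∈ D := by
  obtain ⟨ω, hω⟩ := hne
  convert hinf hω (hsym ω hω)
  ext i
  simp [flipC]

lemma top_mem_of_flipC_mem (hsup : SupClosed D) (hsym : ∀ ω ∈ D, flipC ω ∈ D) (hne : D.Nonempty) :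
    ⊤ ∈ D := by
  obtain ⟨ω, hω⟩ := hne
  convert hsup hω (hsym ω hω)
  ext i
  simp [flipC]

lemma agreeRel_of_forall_le (hsym : ∀ ω ∈ D, flipC ω ∈ D) {u v : Λ}
    (h : ∀ ω ∈ D, ω u ≤ ω v) : agreeRel D u v := fun ω hω =>
  le_antisymm (h ω hω) (compl_le_compl_iff_le.mp (h _ (hsym ω hω)))

variable [Finite Λ]

lemma mem_of_forall_exists_le (hsup : SupClosed D) (hbot : ⊥ ∈ D) {ψ : Λ → Bool}
    (h : ∀ u, ψ u = true → ∃ ω ∈ D, ω ≤ ψ ∧ ω u = true) : ψ ∈ D := by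
  classical
  have := Fintype.ofFinite Λ
  choose! ω hωD hωle hωu using h
  have hψ : ({u | ψ u = true} : Finset Λ).sup ω = ψ := by
    refine le_antisymm (Finset.sup_le fun u hu => hωle u (Finset.mem_filter.mp hu).2) fun i => ?_
    cases hi : ψ i
    · exact bot_le
    · calc true = ω i i := (hωu i hi).symm
        _ ≤ _ := Finset.le_sup (f := ω) (by simpa using hi) i
  exact hψ ▸ Finset.sup_mem D hbot (fun _ ha _ hb => hsup ha hb) _ _
    fun u hu => hωD u (Finset.mem_filter.mp hu).2

lemma mem_of_forall_exists_ge (hinf : InfClosed D) (htop : ⊤ ∈ D) {ψ : Λ → Bool}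
    (h : ∀ v, ψ v = false → ∃ ω ∈ D, ψ ≤ ω ∧ ω v = false) : ψ ∈ D := by
  classical
  have := Fintype.ofFinite Λ
  choose! ω hωD hωge hωv using h
  have hψ : ({v | ψ v = false} : Finset Λ).inf ω = ψ := by
    refine le_antisymm (fun i => ?_) (Finset.le_inf fun v hv => hωge v (Finset.mem_filter.mp hv).2)
    cases hi : ψ i
    · calc _ ≤ ω i i := Finset.inf_le (f := ω) (by simpa using hi) i
        _ = false := hωv i hi
    · exact le_top
  exact hψ ▸ Finset.inf_mem D htop (fun _ ha _ hb => hinf ha hb) _ _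
    fun v hv => hωD v (Finset.mem_filter.mp hv).2

lemma exists_mem_eq_true_iff_forall_le (hinf : InfClosed D) (htop : ⊤ ∈ D) (u : Λ) :
    ∃ φ ∈ D, ∀ v, φ v = true ↔ ∀ ω ∈ D, ω u ≤ ω v := by
  classical
  refine ⟨_, mem_of_forall_exists_ge hinf htop fun v hv => ?_, fun v => decide_eq_true_iff⟩
  obtain ⟨ω, hω, huv⟩ : ∃ ω ∈ D, ¬ ω u ≤ ω v := by simpa using hv
  rw [not_le, Bool.lt_iff] at huv
  refine ⟨ω, hω, fun w hw => ?_, huv.1⟩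
  simpa [huv.2, Bool.le_iff_imp] using of_decide_eq_true hw ω hω

theorem mem_iff_forall_le_imp_le (hD : IsSublattice D) (hbot : ⊥ ∈ D) (htop : ⊤ ∈ D)
    {ψ : Λ → Bool} : ψ ∈ D ↔ ∀ u v, (∀ ω ∈ D, ω u ≤ ω v) → ψ u ≤ ψ v := by
  refine ⟨fun hψ u v h => h ψ hψ, fun hψ =>
    mem_of_forall_exists_le hD.supClosed hbot fun u hu => ?_⟩
  obtain ⟨φ, hφ, hφ_iff⟩ := exists_mem_eq_true_iff_forall_le hD.infClosed htop u
  refine ⟨φ, hφ, fun v hv => ?_, (hφ_iff u).2 fun _ _ => le_rfl⟩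
  simpa [hu, Bool.le_iff_imp] using hψ u v ((hφ_iff v).1 hv)

end BooleanCube

/-- a nonempty symmetric sublattice `D ⊆ {0,1}^Λ` consists exactly of the
configurations constant on each cluster of the agreement relation; in particular
`|D| = 2^m` with `m` the number of clusters. -/
theorem symmetric_sublattice_eq_cluster_constant [Fintype Λ]
    (D : Set (Λ → Bool)) (hne : D.Nonempty)
    (hsym : ∀ ω ∈ D, flipC ω ∈ D)
    (hsup : ∀ ω ∈ D, ∀ ω' ∈ D, (fun i => ω i || ω' i) ∈ D)
    (hinf : ∀ ω ∈ D, ∀ ω' ∈ D, (fun i => ω i && ω' i) ∈ D) :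
    D = {ω | ∀ u v : Λ, agreeRel D u v → ω u = ω v} ∧
      Nat.card D = 2 ^ Nat.card (Quotient (clusterSetoid D)) := by
  have hD : IsSublattice D :=
    ⟨fun _ hω _ hω' => hsup _ hω _ hω', fun _ hω _ hω' => hinf _ hω _ hω'⟩
  have hbot := bot_mem_of_flipC_mem hD.infClosed hsym hne
  have htop := top_mem_of_flipC_mem hD.supClosed hsym hne
  have hset : D = {ω | ∀ u v : Λ, agreeRel D u v → ω u = ω v} :=
    Set.Subset.antisymm (fun ω hω u v huv => huv ω hω) fun ψ hψ =>
      (mem_iff_forall_le_imp_le hD hbot htop).2 fun u v huv =>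
        (hψ u v (agreeRel_of_forall_le hsym huv)).le
  refine ⟨hset, ?_⟩
  rw [Nat.card_congr (Equiv.setCongr hset), ← Fintype.card_bool, ← Nat.card_eq_fintype_card]
  exact Setoid.natCard_setOf_forall_rel_imp_eq (clusterSetoid D)
end

section
/- (FKG theorem for two-point spaces) If P is a probability on {0,1}^Λ, Λ finite, satisfying the FKG lattice condition P(ω∨ω')P(ω∧ω') ≥ P(ω)P(ω') for all ω, ω', then P is positively associated: for all increasing events A, B ⊆ {0,1}^Λ, P(A ∩ B) ≥ P(A)·P(B). -/
lemma IsUpperSet.monotone_boole {α β : Type*} [Preorder α] [Preorder β] [Zero β] [One β]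
    [ZeroLEOneClass β] {s : Set α} [DecidablePred (· ∈ s)] (hs : IsUpperSet s) :
    Monotone fun a ↦ if a ∈ s then (1 : β) else 0 := by
  intro a b hab
  by_cases ha : a ∈ s
  · simp [ha, hs hab ha]
  · simp only [ha, if_false]
    split_ifs <;> simp

lemma fkg_upperSet {α β : Type*} [CommSemiring β] [LinearOrder β] [IsStrictOrderedRing β]
    [ExistsAddOfLE β] [DistribLattice α] [Fintype α] [DecidableEq α] {μ : α → β} (hμ₀ : 0 ≤ μ)
    (hμ : ∀ a b, μ a * μ b ≤ μ (a ⊓ b) * μ (a ⊔ b)) {s t : Finset α}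
    (hs : IsUpperSet (s : Set α)) (ht : IsUpperSet (t : Set α)) :
    (∑ a ∈ s, μ a) * ∑ a ∈ t, μ a ≤ (∑ a, μ a) * ∑ a ∈ s ∩ t, μ a := by
  have := fkg (μ := μ) _ _ hμ₀ (fun _ ↦ by dsimp; positivity) (fun _ ↦ by dsimp; positivity)
    hs.monotone_boole ht.monotone_boole hμ
  simpa [← ite_and, ← Finset.mem_inter, Finset.sum_ite_mem, Finset.inter_comm] using this

/-- FKG theorem for two-point spaces: if a probability `P` on `{0,1}^Λ`
satisfies the FKG lattice condition, then `P` is positively associated: for all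
increasing events `A`, `B`, `P(A ∩ B) ≥ P(A)·P(B)`. -/
theorem fkg_theorem {Λ : Type*} [Fintype Λ] [DecidableEq Λ]
    (P : (Λ → Bool) → ℝ) (h0 : ∀ ω, 0 ≤ P ω) (h1 : ∑ ω : Λ → Bool, P ω = 1)
    (hfkg : ∀ ω ω' : Λ → Bool,
      P ω * P ω' ≤ P (fun i => ω i || ω' i) * P (fun i => ω i && ω' i))
    (A B : Finset (Λ → Bool))
    (hA : ∀ ω ∈ A, ∀ ω' : Λ → Bool, ω ≤ ω' → ω' ∈ A)
    (hB : ∀ ω ∈ B, ∀ ω' : Λ → Bool, ω ≤ ω' → ω' ∈ B) :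
    (∑ ω ∈ A, P ω) * (∑ ω ∈ B, P ω) ≤ ∑ ω ∈ A ∩ B, P ω := by
  have hlattice : ∀ ω ω' : Λ → Bool, P ω * P ω' ≤ P (ω ⊓ ω') * P (ω ⊔ ω') := fun ω ω' ↦
    (hfkg ω ω').trans_eq (mul_comm _ _)
  simpa [h1] using fkg_upperSet h0 hlattice (s := A) (t := B)
    (fun ω ω' h hω ↦ hA ω hω ω' h) (fun ω ω' h hω ↦ hB ω hω ω' h)
end
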